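/- Let F: (0,∞) → ℝ be a nonnegative, differentiable, nondecreasing function satisfying t·F′(t) ≥ c·F(t)² for all t > 0, where c > 0. Then F ≡ 0. -/

import Mathlib

/-!
If `F(a) > 0`, then `F` is nondecreasing (as `t F' ≥ c F² ≥ 0`), hence positive on `[a, ∞)`,
and there `c log t + 1/F(t)` is nonincreasing since its derivative is `c/t - F'/F² ≤ 0`. So
`c log t` stays bounded by `c log a + 1/F(a)` on `[a, ∞)`, which is absurd. The reflection
`t ↦ -F(1/t)` satisfies the same differential inequality, which turns the case `F(a) < 0` into
the previous one.
-/

open Real Set Filter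

section RiccatiInequality

variable {F : ℝ → ℝ} {c : ℝ}

theorem monotoneOn_of_sq_le_mul_deriv (hc : 0 ≤ c)
    (hdiff : ∀ t, 0 < t → DifferentiableAt ℝ F t)
    (hode : ∀ t, 0 < t → c * F t ^ 2 ≤ t * deriv F t) :
    MonotoneOn F (Ioi 0) := by
  have hdiffOn : DifferentiableOn ℝ F (Ioi 0) := fun t ht => (hdiff t ht).differentiableWithinAt
  refine monotoneOn_of_deriv_nonneg (convex_Ioi 0) hdiffOn.continuousOn
    (by rwa [interior_Ioi]) fun t ht => ?_
  rw [interior_Ioi, mem_Ioi] at ht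
  exact nonneg_of_mul_nonneg_right ((by positivity : 0 ≤ c * F t ^ 2).trans (hode t ht)) ht

theorem antitoneOn_mul_log_add_inv {s : Set ℝ} (hs : Convex ℝ s) (hs_pos : s ⊆ Ioi 0)
    (hF : ∀ t ∈ s, F t ≠ 0) (hdiff : ∀ t ∈ s, DifferentiableAt ℝ F t)
    (hode : ∀ t ∈ s, c * F t ^ 2 ≤ t * deriv F t) :
    AntitoneOn (fun t => c * log t + (F t)⁻¹) s := by
  have hderiv : ∀ t ∈ s,
      HasDerivAt (fun t => c * log t + (F t)⁻¹) (c / t - deriv F t / F t ^ 2) t := fun t ht =>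
    (((hasDerivAt_log (hs_pos ht).ne').const_mul c).add
      ((hdiff t ht).hasDerivAt.inv (hF t ht))).congr_deriv (by ring)
  refine antitoneOn_of_hasDerivWithinAt_nonpos hs
    (fun t ht => (hderiv t ht).continuousAt.continuousWithinAt)
    (fun t ht => (hderiv t (interior_subset ht)).hasDerivWithinAt) fun t ht => ?_
  have ht := interior_subset ht
  have hF2 : 0 < F t ^ 2 := by have := hF t ht; positivity
  rw [sub_nonpos, div_le_div_iff₀ (hs_pos ht) hF2]
  linarith [hode t ht]

theorem nonpos_of_sq_le_mul_deriv (hc : 0 < c) (hdiff : ∀ t, 0 < t → DifferentiableAt ℝ F t)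
    (hode : ∀ t, 0 < t → c * F t ^ 2 ≤ t * deriv F t) {a : ℝ} (ha : 0 < a) : F a ≤ 0 := by
  by_contra! hFa
  have hs_pos : Ici a ⊆ Ioi 0 := Ici_subset_Ioi.2 ha
  have hpos : ∀ t ∈ Ici a, 0 < F t := fun t ht =>
    hFa.trans_le (monotoneOn_of_sq_le_mul_deriv hc.le hdiff hode ha (hs_pos ht) ht)
  have hanti := antitoneOn_mul_log_add_inv (convex_Ici a) hs_pos (fun t ht => (hpos t ht).ne')
    (fun t ht => hdiff t (hs_pos ht)) fun t ht => hode t (hs_pos ht)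
  obtain ⟨b, hb_log, hab⟩ := (((tendsto_log_atTop.const_mul_atTop hc).eventually_gt_atTop
    (c * log a + (F a)⁻¹)).and (eventually_ge_atTop a)).exists
  have hb_bound := hanti self_mem_Ici hab hab
  have hb_inv := inv_pos.2 (hpos b hab)
  simp only at hb_bound
  linarith

theorem hasDerivAt_neg_comp_inv {t : ℝ} (hF : DifferentiableAt ℝ F t⁻¹) (ht : t ≠ 0) :
    HasDerivAt (fun s => -F s⁻¹) (deriv F t⁻¹ * (t ^ 2)⁻¹) t :=
  (hF.hasDerivAt.comp t (hasDerivAt_inv ht)).neg.congr_deriv (by ring)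

theorem sq_le_mul_deriv_neg_comp_inv (hdiff : ∀ t, 0 < t → DifferentiableAt ℝ F t)
    (hode : ∀ t, 0 < t → c * F t ^ 2 ≤ t * deriv F t) {t : ℝ} (ht : 0 < t) :
    c * (-F t⁻¹) ^ 2 ≤ t * deriv (fun s => -F s⁻¹) t := by
  rw [(hasDerivAt_neg_comp_inv (hdiff _ (inv_pos.2 ht)) ht.ne').deriv, neg_sq]
  convert hode _ (inv_pos.2 ht) using 1
  field_simp

end RiccatiInequality

theorem ode_lemma_vanishes_general (F : ℝ → ℝ) (c : ℝ) (hc : 0 < c)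
    (hdiff : ∀ t : ℝ, 0 < t → DifferentiableAt ℝ F t)
    (hode : ∀ t : ℝ, 0 < t → c * F t ^ 2 ≤ t * deriv F t) :
    ∀ t : ℝ, 0 < t → F t = 0 := by
  intro a ha
  have hreflected : -F a⁻¹⁻¹ ≤ 0 :=
    nonpos_of_sq_le_mul_deriv hc
      (fun t ht => (hasDerivAt_neg_comp_inv (hdiff _ (inv_pos.2 ht)) ht.ne').differentiableAt)
      (fun t ht => sq_le_mul_deriv_neg_comp_inv hdiff hode ht) (inv_pos.2 ha)
  rw [inv_inv, neg_nonpos] at hreflected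
  exact le_antisymm (nonpos_of_sq_le_mul_deriv hc hdiff hode ha) hreflected

/-- a nonnegative differentiable nondecreasing function
F on (0,∞) with t·F′(t) ≥ c·F(t)², c > 0, vanishes identically. -/
theorem ode_lemma_vanishes (F : ℝ → ℝ) (c : ℝ) (hc : 0 < c)
    (hnonneg : ∀ t : ℝ, 0 < t → 0 ≤ F t)
    (hdiff : ∀ t : ℝ, 0 < t → DifferentiableAt ℝ F t)
    (hmono : MonotoneOn F (Set.Ioi (0:ℝ)))
    (hode : ∀ t : ℝ, 0 < t → c * F t ^ 2 ≤ t * deriv F t) :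
    ∀ t : ℝ, 0 < t → F t = 0 :=
  ode_lemma_vanishes_general F c hc hdiff hode
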